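/- Fix positive integers n_t, n_r, B, M, rate R ∈ (0, n_t·M), and δ ≥ 0, and let d_causal(R,δ;u) be the Theorem-3 diversity with delay u ≥ 1 and d_pred(R,δ;t) the Theorem-4 diversity with t ≥ 0 predictive blocks. Then d_pred(R,δ;0) ≥ d_causal(R,δ;1), i.e., knowing the (mismatched) CSIT of the current block is at least as good, in outage diversity, as causal CSIT with one-block delay. -/
import Mathlib


/-- Theorem 3 recursion: `a_b = 1` for `b ≤ u`, `a_b = a_{b−1} + c·min(δ, a_{b−u})`
for `b > u`, with `c = n_t·n_r`. -/
noncomputable def aT3 (u : ℕ) (c δ : ℝ) : ℕ → ℝ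
  | 0 => 1
  | b + 1 =>
    if b + 1 ≤ u then 1
    else aT3 u c δ b + c * min δ (aT3 u c δ (b - (u - 1)))
termination_by b => b
decreasing_by all_goals omega

/-- Singleton-bound diversity `d_S(R) = 1 + ⌊B (n_t − R/M)⌋`. -/
noncomputable def dS (B nt M : ℕ) (R : ℝ) : ℤ := 1 + ⌊(B : ℝ) * (nt - R / M)⌋

/-- `b̂ = ⌊d_S/n_t⌋`. -/
noncomputable def bhat (B nt M : ℕ) (R : ℝ) : ℕ := (dS B nt M R).toNat / nt

/-- Theorem 3: optimal rate-diversity tradeoff of the MIMO block-fading channel with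
causal mismatched CSIT of delay `u` and quality exponent `δ`:
`d(R,δ) = n_r·n_t·∑_{b=1}^{b̂} a_b + n_r·(d_S − b̂·n_t)·a_{b̂+1}`. -/
noncomputable def dCausal (nt nr B M u : ℕ) (R δ : ℝ) : ℝ :=
  nr * nt * (∑ b ∈ Finset.Icc 1 (bhat B nt M R), aT3 u ((nt : ℝ) * nr) δ b) +
    nr * ((dS B nt M R : ℝ) - (bhat B nt M R : ℝ) * nt) *
      aT3 u ((nt : ℝ) * nr) δ (bhat B nt M R + 1)

/-- Theorem 4: optimal rate-diversity tradeoff with predictive mismatched CSIT covering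
`t` future blocks with quality exponent `δ`. -/
noncomputable def dPred (nt nr B M t : ℕ) (R δ : ℝ) : ℝ :=
  if bhat B nt M R ≤ t then
    nr * (dS B nt M R : ℝ) * (1 + nr * (dS B nt M R : ℝ) * δ)
  else
    nr * ((dS B nt M R : ℝ) + nr * δ *
      ((((bhat B nt M R : ℝ) - t) * ((bhat B nt M R : ℝ) + t + 1) / 2) * nt ^ 2 +
        (dS B nt M R : ℝ) * ((dS B nt M R : ℝ) - nt * ((bhat B nt M R : ℝ) - t))))

lemma aT3_one_le (c δ : ℝ) (hc : 0 ≤ c) (hδ : 0 ≤ δ) :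
    ∀ b : ℕ, aT3 1 c δ (b + 1) ≤ 1 + b * (c * δ) := by
  intro b
  induction b with
  | zero => simp [aT3]
  | succ n ih =>
    have h : aT3 1 c δ (n + 2) = aT3 1 c δ (n + 1) + c * min δ (aT3 1 c δ (n + 1)) := by
      rw [aT3]
      simp
    rw [h]
    have hmin : c * min δ (aT3 1 c δ (n + 1)) ≤ c * δ :=
      mul_le_mul_of_nonneg_left (min_le_left _ _) hc
    push_cast
    nlinarith [mul_nonneg hc hδ]

lemma aT3_sum_le (c δ : ℝ) (hc : 0 ≤ c) (hδ : 0 ≤ δ) :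
    ∀ n : ℕ, (∑ b ∈ Finset.Icc 1 n, aT3 1 c δ b) ≤
      n + c * δ * (n * (n - 1) / 2) := by
  intro n
  induction n with
  | zero => simp
  | succ n ih =>
    rw [Finset.sum_Icc_succ_top (by omega : 1 ≤ n + 1)]
    have h2 := aT3_one_le c δ hc hδ n
    push_cast
    nlinarith [mul_nonneg hc hδ]

/-- Knowing the (mismatched) CSIT of the current block (`t = 0` predictive CSIT) is at
least as good, in outage diversity, as causal CSIT with one-block delay (`u = 1`). -/
theorem dPred_zero_ge_dCausal_one (nt nr B M : ℕ)
    (hnt : 0 < nt) (hnr : 0 < nr) (hB : 0 < B) (hM : 0 < M)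
    (R δ : ℝ) (hR0 : 0 < R) (hR1 : R < (nt : ℝ) * M) (hδ : 0 ≤ δ) :
    dPred nt nr B M 0 R δ ≥ dCausal nt nr B M 1 R δ := by
  have hM0 : (0:ℝ) < M := by exact_mod_cast hM
  have hx : (0:ℝ) ≤ (B : ℝ) * (nt - R / M) := by
    have : R / M ≤ (nt : ℝ) := by
      rw [div_le_iff₀ hM0]; linarith
    have hB0 : (0:ℝ) ≤ B := by positivity
    nlinarith
  have hdS1 : (1 : ℤ) ≤ dS B nt M R := by
    have : (0:ℤ) ≤ ⌊(B : ℝ) * (nt - R / M)⌋ := Int.floor_nonneg.2 hx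
    unfold dS; omega
  set D : ℝ := (dS B nt M R : ℝ) with hD
  have hD1 : (1:ℝ) ≤ D := by rw [hD]; exact_mod_cast hdS1
  set n : ℕ := bhat B nt M R with hn
  have htonat : ((dS B nt M R).toNat : ℤ) = dS B nt M R := Int.toNat_of_nonneg (by omega)
  have hnnt : (n : ℝ) * nt ≤ D := by
    have h1 : n * nt ≤ (dS B nt M R).toNat := Nat.div_mul_le_self _ _
    have : ((n * nt : ℕ) : ℤ) ≤ dS B nt M R := by rw [← htonat]; exact_mod_cast h1
    have h3 : (((n * nt : ℕ) : ℤ) : ℝ) ≤ ((dS B nt M R : ℤ) : ℝ) := by exact_mod_cast this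
    push_cast at h3
    rw [hD]
    linarith
  set c : ℝ := (nt : ℝ) * nr with hcdef
  have hc : 0 ≤ c := by positivity
  have hnr0 : (0:ℝ) ≤ nr := by positivity
  have hnt0 : (0:ℝ) ≤ nt := by positivity
  unfold dPred dCausal
  rw [← hn, ← hD, ← hcdef]
  by_cases h0 : n ≤ 0
  · rw [if_pos h0]
    have hn0 : n = 0 := by omega
    rw [hn0]
    simp only [Finset.Icc_eq_empty_of_lt (by norm_num : (1:ℕ) > 0), Finset.sum_empty,
      Nat.cast_zero, zero_mul, sub_zero, zero_add]
    have ha1 : aT3 1 c δ 1 = 1 := by simp [aT3]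
    rw [ha1]
    push_cast
    nlinarith [mul_nonneg (mul_nonneg hnr0 (le_trans zero_le_one hD1)) hδ,
      mul_nonneg hnr0 (le_trans zero_le_one hD1)]
  · rw [if_neg h0]
    have hsum := aT3_sum_le c δ hc hδ n
    have ha := aT3_one_le c δ hc hδ n
    have he : 0 ≤ D - n * nt := by linarith
    push_cast
    have key1 : (nr:ℝ) * nt * (∑ b ∈ Finset.Icc 1 n, aT3 1 c δ b) ≤
        nr * nt * (n + c * δ * (n * (n - 1) / 2)) :=
      mul_le_mul_of_nonneg_left hsum (by positivity)
    have key2 : (nr:ℝ) * (D - n * nt) * aT3 1 c δ (n + 1) ≤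
        nr * (D - n * nt) * (1 + n * (c * δ)) :=
      mul_le_mul_of_nonneg_left ha (by positivity)
    have hfin : (nr:ℝ) * nt * (n + c * δ * (n * (n - 1) / 2)) +
        nr * (D - n * nt) * (1 + n * (c * δ)) ≤
        nr * (D + nr * δ * (((n : ℝ) - 0) * ((n : ℝ) + 0 + 1) / 2 * nt ^ 2 +
          D * (D - nt * ((n : ℝ) - 0)))) := by
      rw [hcdef]
      nlinarith [mul_nonneg (mul_nonneg (mul_nonneg hnr0 hnr0) hδ)
          (mul_nonneg (mul_nonneg hnt0 hnt0) (Nat.cast_nonneg n : (0:ℝ) ≤ n)),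
        mul_nonneg (mul_nonneg (mul_nonneg hnr0 hnr0) hδ) (mul_self_nonneg (D - n * nt))]
    linarith
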